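/- Let H be an entropy and n ∈ ℕ. Then for every i ∈ [n] and every p ∈ P(n): H(e_i^{(n)}) = 0, H(u_n) = log n, and 0 ≤ H(p) ≤ log n, where e_i^{(n)} ∈ P(n) is the deterministic vector with all mass on index i and u_n ∈ P(n) is the uniform vector. -/

import Mathlib

open scoped BigOperators ENNReal

/-- A probability vector: nonnegative entries summing to 1. -/
def IsProbVec {n : ℕ} (p : Fin n → ℝ) : Prop :=
  (∀ i, 0 ≤ p i) ∧ ∑ i, p i = 1

/-- The uniform probability vector on `n` outcomes. -/
noncomputable def uniform (n : ℕ) : Fin n → ℝ := fun _ => (n : ℝ)⁻¹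

/-- Kronecker (tensor) product of two vectors. -/
noncomputable def kron {n m : ℕ} (p : Fin n → ℝ) (q : Fin m → ℝ) : Fin (n * m) → ℝ :=
  fun i => p (finProdFinEquiv.symm i).1 * q (finProdFinEquiv.symm i).2

/-- Sum of the `k` largest entries (for vectors with nonnegative entries):
the supremum of sums over subsets of at most `k` indices. -/
noncomputable def maxPartialSum {n : ℕ} (p : Fin n → ℝ) (k : ℕ) : ℝ :=
  sSup { x | ∃ s : Finset (Fin n), s.card ≤ k ∧ ∑ i ∈ s, p i = x }

/-- `p` majorises `q`: every partial sum of the `k` largest entries of `p`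
dominates that of `q` (entries beyond a vector's length count as 0). -/
def Majorizes {n m : ℕ} (p : Fin n → ℝ) (q : Fin m → ℝ) : Prop :=
  ∀ k : ℕ, maxPartialSum q k ≤ maxPartialSum p k

/-- A channel: an `n × m` row-stochastic matrix. -/
def IsStochastic {n m : ℕ} (W : Matrix (Fin n) (Fin m) ℝ) : Prop :=
  (∀ i j, 0 ≤ W i j) ∧ ∀ i, ∑ j, W i j = 1

/-- Relative majorisation of pairs: some channel maps `(p, q)` to `(p', q')`. -/
def RelMaj {n m : ℕ} (p q : Fin n → ℝ) (p' q' : Fin m → ℝ) : Prop :=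
  ∃ W : Matrix (Fin n) (Fin m) ℝ, IsStochastic W ∧
    Matrix.vecMul p W = p' ∧ Matrix.vecMul q W = q'

/-- An entropy: a `[0,∞)`-valued function on probability vectors of all finite dimensions
that is monotone under mixing (majorisation), additive for Kronecker products,
and normalised so that `H(u₂) = log 2` (binary logarithm). -/
structure IsEntropy (H : (n : ℕ) → (Fin n → ℝ) → ℝ) : Prop where
  nonneg : ∀ {n : ℕ} (p : Fin n → ℝ), IsProbVec p → 0 ≤ H n p
  mono : ∀ {n m : ℕ} (p : Fin n → ℝ) (p' : Fin m → ℝ),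
    IsProbVec p → IsProbVec p' → Majorizes p p' → H n p ≤ H m p'
  additive : ∀ {n m : ℕ} (p : Fin n → ℝ) (q : Fin m → ℝ),
    IsProbVec p → IsProbVec q → H (n * m) (kron p q) = H n p + H m q
  normalized : H 2 (uniform 2) = Real.logb 2 2

/-- A monotone divergence: a `[0,∞]`-valued function on pairs of probability vectors of
equal finite dimension satisfying the data-processing inequality and `𝔻(1‖1) = 0`. -/
structure IsMonotoneDivergence (D : (n : ℕ) → (Fin n → ℝ) → (Fin n → ℝ) → ℝ≥0∞) : Prop where
  dpi : ∀ {n m : ℕ} (p q : Fin n → ℝ) (p' q' : Fin m → ℝ),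
    IsProbVec p → IsProbVec q → IsProbVec p' → IsProbVec q' →
    RelMaj p q p' q' → D m p' q' ≤ D n p q
  normalized : D 1 (fun _ => 1) (fun _ => 1) = 0

/-- A relative entropy: data-processing inequality, additivity for Kronecker products,
and the normalisation `𝔻(e₁‖u₂) = log 2` (binary logarithm). -/
structure IsRelativeEntropy (D : (n : ℕ) → (Fin n → ℝ) → (Fin n → ℝ) → ℝ≥0∞) : Prop where
  dpi : ∀ {n m : ℕ} (p q : Fin n → ℝ) (p' q' : Fin m → ℝ),
    IsProbVec p → IsProbVec q → IsProbVec p' → IsProbVec q' →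
    RelMaj p q p' q' → D m p' q' ≤ D n p q
  additive : ∀ {n m : ℕ} (p₁ q₁ : Fin n → ℝ) (p₂ q₂ : Fin m → ℝ),
    IsProbVec p₁ → IsProbVec q₁ → IsProbVec p₂ → IsProbVec q₂ →
    D (n * m) (kron p₁ p₂) (kron q₁ q₂) = D n p₁ q₁ + D m p₂ q₂
  normalized : D 2 ![1, 0] ![1/2, 1/2] = ENNReal.ofReal (Real.logb 2 2)

/-!
A deterministic vector majorises every probability vector, and every probability vector of
length `n` majorises `uₙ`; so by monotonicity everything reduces to `H(eᵢ)` and to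
`f n = H(uₙ)`. Additivity applied to the deterministic vector `eᵢ ⊗ eᵢ` forces `H(eᵢ) = 0`.
The function `f` is monotone, turns products into sums and has `f 2 = 1`; comparing `n ^ k`
with the neighbouring powers of two puts `f n` within `1 / k` of `log n` for every `k`.
-/

section Majorization

variable {n m : ℕ}

lemma sum_le_maxPartialSum (p : Fin n → ℝ) {k : ℕ} {s : Finset (Fin n)} (hs : s.card ≤ k) :
    ∑ i ∈ s, p i ≤ maxPartialSum p k := by
  refine le_csSup ?_ ⟨s, hs, rfl⟩
  have hfin : Set.Finite (Set.range fun s : Finset (Fin n) => ∑ i ∈ s, p i) := Set.finite_range _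
  exact (hfin.subset <| by rintro _ ⟨s, -, rfl⟩; exact ⟨s, rfl⟩).bddAbove

lemma maxPartialSum_le {p : Fin n → ℝ} {k : ℕ} {c : ℝ}
    (h : ∀ s : Finset (Fin n), s.card ≤ k → ∑ i ∈ s, p i ≤ c) : maxPartialSum p k ≤ c :=
  csSup_le ⟨0, ∅, by simp⟩ fun _ ⟨s, hs, hsum⟩ => hsum ▸ h s hs

lemma majorizes_of_forall_exists_sum_le {p : Fin n → ℝ} {q : Fin m → ℝ}
    (h : ∀ t : Finset (Fin m), ∃ s : Finset (Fin n), s.card ≤ t.card ∧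
      ∑ j ∈ t, q j ≤ ∑ i ∈ s, p i) :
    Majorizes p q := fun _ =>
  maxPartialSum_le fun t ht => by
    obtain ⟨s, hs, hsum⟩ := h t
    exact hsum.trans (sum_le_maxPartialSum p (hs.trans ht))

lemma IsProbVec.pos {p : Fin n → ℝ} (hp : IsProbVec p) : 0 < n :=
  Nat.pos_of_ne_zero <| by rintro rfl; simpa using hp.2

lemma IsProbVec.sum_le_one {p : Fin n → ℝ} (hp : IsProbVec p) (s : Finset (Fin n)) :
    ∑ i ∈ s, p i ≤ 1 :=
  hp.2 ▸ Finset.sum_le_sum_of_subset_of_nonneg s.subset_univ fun i _ _ => hp.1 i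

lemma majorizes_of_apply_eq_one {p : Fin n → ℝ} {q : Fin m → ℝ} {i : Fin n} (hi : p i = 1)
    (hq : IsProbVec q) : Majorizes p q := by
  refine majorizes_of_forall_exists_sum_le fun t => ?_
  rcases t.eq_empty_or_nonempty with rfl | ht
  · exact ⟨∅, le_rfl, by simp⟩
  · exact ⟨{i}, by simpa using ht.card_pos, by simpa [hi] using hq.sum_le_one t⟩

/-- Repeatedly discarding a smallest entry never lowers the average. -/
lemma Finset.exists_subset_card_eq_mul_sum_le {ι : Type*} [DecidableEq ι] (p : ι → ℝ)
    (u : Finset ι) {k : ℕ} (hk : k ≤ u.card) :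
    ∃ s ⊆ u, s.card = k ∧ k * ∑ i ∈ u, p i ≤ u.card * ∑ i ∈ s, p i := by
  induction hk using Nat.decreasingInduction with
  | self => exact ⟨u, subset_rfl, rfl, le_rfl⟩
  | of_succ k hk ih =>
    obtain ⟨s, hsu, hcard, hsum⟩ := ih
    have hne : s.Nonempty := by rw [← Finset.card_pos, hcard]; omega
    obtain ⟨j, hj, hmin⟩ := s.exists_min_image p hne
    have hpj : (k + 1 : ℝ) * p j ≤ ∑ i ∈ s, p i := by
      have := s.card_nsmul_le_sum p (p j) hmin
      rwa [hcard, nsmul_eq_mul, Nat.cast_succ] at this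
    refine ⟨s.erase j, (s.erase_subset j).trans hsu, by simp [hcard, hj], ?_⟩
    rw [Finset.sum_erase_eq_sub hj]
    push_cast at hsum
    have hu : (0 : ℝ) ≤ u.card := Nat.cast_nonneg _
    nlinarith [mul_le_mul_of_nonneg_left hpj hu]

lemma IsProbVec.majorizes_uniform {p : Fin n → ℝ} (hp : IsProbVec p) :
    Majorizes p (uniform n) := by
  refine majorizes_of_forall_exists_sum_le fun t => ?_
  obtain ⟨s, -, hcard, hsum⟩ :=
    Finset.univ.exists_subset_card_eq_mul_sum_le p (t.card_le_univ.trans_eq Finset.card_univ.symm)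
  refine ⟨s, hcard.le, ?_⟩
  simp only [Finset.card_univ, Fintype.card_fin, hp.2, mul_one] at hsum
  simp only [uniform, Finset.sum_const, nsmul_eq_mul, ← div_eq_mul_inv]
  rwa [div_le_iff₀' (by exact_mod_cast hp.pos)]

end Majorization

section AdditiveMonotone

variable {f : ℕ → ℝ}

lemma map_pow_of_map_mul (hmul : ∀ a b, 0 < a → 0 < b → f (a * b) = f a + f b) {n : ℕ}
    (hn : 0 < n) (k : ℕ) : f (n ^ k) = k * f n := by
  induction k with
  | zero => simpa using hmul 1 1 one_pos one_pos
  | succ k ih => rw [pow_succ, hmul _ _ (pow_pos hn k) hn, ih]; push_cast; ring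

/-- `f (n ^ k)` is pinned between `f (2 ^ a) = a` and `f (2 ^ (a + 1)) = a + 1`. -/
lemma natLog_le_mul_map_le_natLog_add_one (hmul : ∀ a b, 0 < a → 0 < b → f (a * b) = f a + f b)
    (hmono : MonotoneOn f (Set.Ioi 0)) (h2 : f 2 = 1) {n : ℕ} (hn : 0 < n) (k : ℕ) :
    (Nat.log 2 (n ^ k) : ℝ) ≤ k * f n ∧ k * f n ≤ Nat.log 2 (n ^ k) + 1 := by
  have hpow2 (a : ℕ) : f (2 ^ a) = a := by rw [map_pow_of_map_mul hmul two_pos, h2, mul_one]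
  have hnk : 0 < n ^ k := pow_pos hn k
  rw [← map_pow_of_map_mul hmul hn k]
  constructor
  · rw [← hpow2]
    exact hmono (Nat.two_pow_pos _) hnk (Nat.pow_log_le_self 2 hnk.ne')
  · rw [← Nat.cast_add_one, ← hpow2]
    exact hmono hnk (Nat.two_pow_pos _) (Nat.lt_pow_succ_log_self one_lt_two _).le

lemma eq_of_map_mul_of_monotoneOn {g : ℕ → ℝ}
    (hfmul : ∀ a b, 0 < a → 0 < b → f (a * b) = f a + f b) (hfmono : MonotoneOn f (Set.Ioi 0))
    (hf2 : f 2 = 1) (hgmul : ∀ a b, 0 < a → 0 < b → g (a * b) = g a + g b)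
    (hgmono : MonotoneOn g (Set.Ioi 0)) (hg2 : g 2 = 1) {n : ℕ} (hn : 0 < n) : f n = g n := by
  refine eq_of_forall_dist_le fun ε hε => ?_
  obtain ⟨k, hk⟩ := exists_nat_one_div_lt hε
  have hk0 : (0 : ℝ) < k + 1 := k.cast_add_one_pos
  obtain ⟨hf₁, hf₂⟩ := natLog_le_mul_map_le_natLog_add_one hfmul hfmono hf2 hn (k + 1)
  obtain ⟨hg₁, hg₂⟩ := natLog_le_mul_map_le_natLog_add_one hgmul hgmono hg2 hn (k + 1)
  push_cast at hf₁ hf₂ hg₁ hg₂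
  have : (k + 1 : ℝ) * |f n - g n| ≤ 1 := by
    rw [← abs_of_pos hk0, ← abs_mul, abs_le]; constructor <;> linarith
  rw [div_lt_iff₀ hk0] at hk
  rw [Real.dist_eq]
  nlinarith

lemma logb_natCast_mul (a b : ℕ) (ha : 0 < a) (hb : 0 < b) :
    Real.logb 2 ((a * b : ℕ) : ℝ) = Real.logb 2 a + Real.logb 2 b := by
  push_cast
  exact Real.logb_mul (by positivity) (by positivity)

lemma monotoneOn_logb_natCast : MonotoneOn (fun n : ℕ => Real.logb 2 n) (Set.Ioi 0) :=
  fun a ha _ _ hab =>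
    Real.logb_le_logb_of_le one_lt_two (by exact_mod_cast ha) (by exact_mod_cast hab)

theorem eq_logb_of_map_mul_of_monotoneOn (hmul : ∀ a b, 0 < a → 0 < b → f (a * b) = f a + f b)
    (hmono : MonotoneOn f (Set.Ioi 0)) (h2 : f 2 = 1) {n : ℕ} (hn : 0 < n) :
    f n = Real.logb 2 n :=
  eq_of_map_mul_of_monotoneOn hmul hmono h2 logb_natCast_mul monotoneOn_logb_natCast
    (by simp) hn

end AdditiveMonotone

section Entropy

variable {n m : ℕ}

lemma isProbVec_single (i : Fin n) : IsProbVec (fun j => if j = i then (1 : ℝ) else 0) :=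
  ⟨fun j => by positivity, by simp⟩

lemma isProbVec_uniform (hn : 0 < n) : IsProbVec (uniform n) :=
  ⟨fun _ => by unfold uniform; positivity, by simp [uniform, hn.ne']⟩

lemma IsProbVec.kron {p : Fin n → ℝ} {q : Fin m → ℝ} (hp : IsProbVec p) (hq : IsProbVec q) :
    IsProbVec (kron p q) := by
  refine ⟨fun i => mul_nonneg (hp.1 _) (hq.1 _), ?_⟩
  rw [← finProdFinEquiv.sum_comp, Fintype.sum_prod_type]
  simp only [_root_.kron, Equiv.symm_apply_apply, ← Finset.mul_sum, hq.2, mul_one, hp.2]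

lemma kron_uniform : kron (uniform n) (uniform m) = uniform (n * m) := by
  funext j
  simp only [kron, uniform, Nat.cast_mul, mul_inv]

lemma uniform_majorizes_uniform (hm : 0 < m) (hmn : m ≤ n) :
    Majorizes (uniform m) (uniform n) := by
  refine majorizes_of_forall_exists_sum_le fun t => ?_
  obtain ⟨s, -, hs⟩ := Finset.exists_subset_card_eq (s := (Finset.univ : Finset (Fin m)))
    (n := min t.card m) (by simp)
  refine ⟨s, hs.trans_le (min_le_left _ _), ?_⟩
  have hmR : (0 : ℝ) < m := by exact_mod_cast hm
  have htn : (t.card : ℝ) ≤ n := by exact_mod_cast t.card_le_univ.trans_eq (Fintype.card_fin n)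
  simp only [uniform, Finset.sum_const, nsmul_eq_mul, hs, ← div_eq_mul_inv]
  rcases le_total t.card m with h | h
  · rw [min_eq_left h]
    exact div_le_div_of_nonneg_left (Nat.cast_nonneg _) hmR (by exact_mod_cast hmn)
  · rw [min_eq_right h, div_self hmR.ne']
    exact div_le_one_of_le₀ htn (Nat.cast_nonneg _)

namespace IsEntropy

variable {H : (n : ℕ) → (Fin n → ℝ) → ℝ}

/-- `eᵢ ⊗ eᵢ` is again deterministic, so it has the same entropy as `eᵢ`, which is
twice that entropy by additivity. -/
lemma apply_single (hH : IsEntropy H) (i : Fin n) :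
    H n (fun j => if j = i then 1 else 0) = 0 := by
  set e : Fin n → ℝ := fun j => if j = i then 1 else 0
  have he : IsProbVec e := isProbVec_single i
  have hee : kron e e (finProdFinEquiv (i, i)) = 1 := by simp [e, kron]
  have h₁ := hH.mono _ _ (he.kron he) he (majorizes_of_apply_eq_one hee he)
  have h₂ := hH.mono _ _ he (he.kron he)
    (majorizes_of_apply_eq_one (i := i) (by simp [e]) (he.kron he))
  linarith [hH.additive e e he he]

lemma apply_uniform (hH : IsEntropy H) (hn : 0 < n) : H n (uniform n) = Real.logb 2 n := by
  refine eq_logb_of_map_mul_of_monotoneOn (f := fun n => H n (uniform n)) (fun a b ha hb => ?_)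
    (fun a ha b hb hab => ?_) ?_ hn
  · rw [← kron_uniform]
    exact hH.additive _ _ (isProbVec_uniform ha) (isProbVec_uniform hb)
  · exact hH.mono _ _ (isProbVec_uniform ha) (isProbVec_uniform hb)
      (uniform_majorizes_uniform ha hab)
  · simpa using hH.normalized

lemma apply_le_logb (hH : IsEntropy H) {p : Fin n → ℝ} (hp : IsProbVec p) :
    H n p ≤ Real.logb 2 n := by
  rw [← hH.apply_uniform hp.pos]
  exact hH.mono p (uniform n) hp (isProbVec_uniform hp.pos) hp.majorizes_uniform

end IsEntropy

end Entropy

/-- for an entropy `H`: `H(eᵢ⁽ⁿ⁾) = 0`, `H(uₙ) = log n` and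
`0 ≤ H(p) ≤ log n` for every `p ∈ P(n)` (binary logarithm). -/
theorem stmt1 (H : (n : ℕ) → (Fin n → ℝ) → ℝ) (hH : IsEntropy H) (n : ℕ) :
    ∀ (i : Fin n) (p : Fin n → ℝ), IsProbVec p →
      H n (fun j => if j = i then 1 else 0) = 0 ∧
      H n (uniform n) = Real.logb 2 n ∧
      0 ≤ H n p ∧ H n p ≤ Real.logb 2 n := by
  intro i p hp
  exact ⟨hH.apply_single i, hH.apply_uniform i.pos, hH.nonneg p hp, hH.apply_le_logb hp⟩
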